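/- In the All-but-k game with k jars (k ≥ 2), every position (a_1, ..., a_k) whose coordinates take exactly two distinct values, i.e., |{a_1, ..., a_k}| = 2, is an N-position. -/

import Mathlib

/-- A move in a CM-Nim game with permissible family `𝒮`: choose a permissible
(nonempty) set `S` of jars and a positive number `c` of cookies with `c ≤ p i`
for every `i ∈ S`, and take `c` cookies from each jar in `S`. -/
def CMMove {k : ℕ} (𝒮 : Set (Finset (Fin k))) (p q : Fin k → ℕ) : Prop :=
  ∃ S ∈ 𝒮, S.Nonempty ∧ ∃ c > 0, (∀ i ∈ S, c ≤ p i ∧ q i = p i - c) ∧ ∀ i ∉ S, q i = p i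

lemma CMMove.sum_lt {k : ℕ} {𝒮 : Set (Finset (Fin k))} {p q : Fin k → ℕ}
    (h : CMMove 𝒮 p q) : ∑ i, q i < ∑ i, p i := by
  obtain ⟨S, hS, ⟨i0, hi0⟩, c, hc, h1, h2⟩ := h
  apply Finset.sum_lt_sum
  · intro i _
    by_cases hi : i ∈ S
    · have := h1 i hi; omega
    · rw [h2 i hi]
  · exact ⟨i0, Finset.mem_univ _, by have := h1 i0 hi0; omega⟩

/-- P-positions of a CM-Nim game, defined by well-founded recursion on the
total number of cookies: a position is a P-position iff every move from it
leads to a position that is not a P-position. -/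
def CMPPos {k : ℕ} (𝒮 : Set (Finset (Fin k))) (p : Fin k → ℕ) : Prop :=
  ∀ q, CMMove 𝒮 p q → ¬ CMPPos 𝒮 q
termination_by ∑ i, p i
decreasing_by exact CMMove.sum_lt (by assumption)

/-- Nim with `k` piles: only singletons are permissible. -/
def NimSets (k : ℕ) : Set (Finset (Fin k)) := {S | ∃ i, S = {i}}

/-- The All-but-`k` game with `k` jars: the permissible sets are all nonempty
proper subsets of the set of jars. -/
def AllButSets (k : ℕ) : Set (Finset (Fin k)) :=
  {S | S.Nonempty ∧ S ≠ Finset.univ}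

/-!
In the All-but-`k` game every constant position is a P-position: a move taking `c` cookies from
the jars of a proper subset `S` is answered by taking `c` cookies from the jars of `Sᶜ`, which is
again permissible and restores a constant position. A position with exactly two values `x < y` is
then an N-position, since taking `y - x` cookies from every jar holding `y` (a proper subset, as
some jar holds `x`) reaches the constant position `x`.
-/

lemma cmPPos_iff {k : ℕ} (𝒮 : Set (Finset (Fin k))) (p : Fin k → ℕ) :
    CMPPos 𝒮 p ↔ ∀ q, CMMove 𝒮 p q → ¬ CMPPos 𝒮 q := by
  rw [CMPPos]

lemma CMMove.not_cmPPos {k : ℕ} {𝒮 : Set (Finset (Fin k))} {p q : Fin k → ℕ}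
    (h : CMMove 𝒮 p q) (hq : CMPPos 𝒮 q) : ¬ CMPPos 𝒮 p :=
  fun hp => (cmPPos_iff 𝒮 p).1 hp q h hq

lemma compl_mem_allButSets {k : ℕ} {S : Finset (Fin k)} (hS : S ∈ AllButSets k) :
    Sᶜ ∈ AllButSets k := by
  obtain ⟨⟨i, hi⟩, hSu⟩ := hS
  exact ⟨Finset.nonempty_iff_ne_empty.2 (mt (Finset.compl_eq_empty_iff S).1 hSu),
    fun h => Finset.notMem_compl.2 hi (h ▸ Finset.mem_univ i)⟩

lemma CMMove.exists_const_of_allBut_const {k m : ℕ} {q : Fin k → ℕ}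
    (h : CMMove (AllButSets k) (fun _ => m) q) :
    ∃ m' < m, CMMove (AllButSets k) q (fun _ => m') := by
  obtain ⟨S, hS, ⟨i, hi⟩, c, hc, hmoved, hkept⟩ := h
  have hcm : c ≤ m := (hmoved i hi).1
  obtain ⟨j, hj⟩ := (compl_mem_allButSets hS).1
  refine ⟨m - c, by omega, Sᶜ, compl_mem_allButSets hS, ⟨j, hj⟩, c, hc, ?_, ?_⟩
  · intro i hi
    rw [hkept i (Finset.mem_compl.1 hi)]
    exact ⟨hcm, rfl⟩
  · intro i hi
    rw [(hmoved i (Finset.notMem_compl.1 hi)).2]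

lemma cmPPos_allBut_const (k m : ℕ) : CMPPos (AllButSets k) (fun _ => m) := by
  induction m using Nat.strong_induction_on with
  | _ m ih =>
    rw [cmPPos_iff]
    intro q hq
    obtain ⟨m', hm', hmove⟩ := hq.exists_const_of_allBut_const
    exact hmove.not_cmPPos (ih m' hm')

lemma cmMove_allBut_const_of_two_values {k x y : ℕ} {a : Fin k → ℕ} (hxy : x < y)
    (hvals : ∀ i, a i = x ∨ a i = y) {ix iy : Fin k} (hix : a ix = x) (hiy : a iy = y) :
    CMMove (AllButSets k) a (fun _ => x) := by
  refine ⟨Finset.univ.filter (a · = y), ⟨⟨iy, by simpa⟩, fun h => ?_⟩, ⟨iy, by simpa⟩,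
    y - x, by omega, ?_, ?_⟩
  · have : ix ∈ Finset.univ.filter (a · = y) := h.symm ▸ Finset.mem_univ ix
    simp only [Finset.mem_filter, Finset.mem_univ, true_and] at this
    omega
  · intro i hi
    simp only [Finset.mem_filter, Finset.mem_univ, true_and] at hi
    exact ⟨by omega, by simp only; omega⟩
  · intro i hi
    simp only [Finset.mem_filter, Finset.mem_univ, true_and] at hi
    have := hvals i
    simp only
    omega

theorem allBut_two_values_npos_general (k : ℕ) (a : Fin k → ℕ)
    (h2 : (Finset.univ.image a).card = 2) :
    ¬ CMPPos (AllButSets k) a := by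
  obtain ⟨x, y, hne, himage⟩ := Finset.card_eq_two.mp h2
  wlog hxy : x < y generalizing x y
  · exact this y x hne.symm (himage.trans (Finset.pair_comm x y)) (by omega)
  have hmem : ∀ v, v ∈ Finset.univ.image a ↔ v = x ∨ v = y := by simp [himage]
  obtain ⟨ix, -, hix⟩ := Finset.mem_image.1 ((hmem x).2 (Or.inl rfl))
  obtain ⟨iy, -, hiy⟩ := Finset.mem_image.1 ((hmem y).2 (Or.inr rfl))
  have hvals : ∀ i, a i = x ∨ a i = y := fun i =>
    (hmem (a i)).1 (Finset.mem_image_of_mem a (Finset.mem_univ i))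
  exact (cmMove_allBut_const_of_two_values hxy hvals hix hiy).not_cmPPos
    (cmPPos_allBut_const k x)

/-- In the All-but-`k` game with `k ≥ 2` jars, every position whose coordinates
take exactly two distinct values is an N-position. -/
theorem allBut_two_values_npos (k : ℕ) (hk : 2 ≤ k) (a : Fin k → ℕ)
    (h2 : (Finset.univ.image a).card = 2) :
    ¬ CMPPos (AllButSets k) a :=
  allBut_two_values_npos_general k a h2
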